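/- arXiv:1904.03505 — 2 statements merged into one kernel-verified Lean document; each statement's English description precedes it below -/
import Mathlib

section
/- A request profile P is feasible for the fleet (p̄, x) if and only if its E-p transform is dominated pointwise by the capacity curve of the fleet, i.e. P ∈ F_{p̄,x} ⟺ E_P(p) ≤ Ω_{p̄,x}(p) for all p ≥ 0. -/
open MeasureTheory Set
open scoped ENNReal

/-- The E-p transform of a request profile `P`: the energy required above power level `p`. -/
noncomputable def Etrans (P : ℝ → ℝ) (p : ℝ) : ℝ≥0∞ :=
  ∫⁻ t in Ioi (0 : ℝ), ENNReal.ofReal (max (P t - p) 0)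

/-- The worst-case request profile `R(t) = Σᵢ p̄ᵢ · 1_{[0, xᵢ)}(t)`. -/
noncomputable def Rprof (n : ℕ) (pbar x : Fin n → ℝ) (t : ℝ) : ℝ :=
  ∑ i, Set.indicator (Ico (0 : ℝ) (x i)) (fun _ => pbar i) t

/-- The capacity curve of the fleet `(p̄, x)`. -/
noncomputable def capacity (n : ℕ) (pbar x : Fin n → ℝ) (p : ℝ) : ℝ≥0∞ :=
  Etrans (Rprof n pbar x) p

/-- A request profile `P` is feasible for the fleet `(p̄, x)`. -/
def Feasible (n : ℕ) (pbar x : Fin n → ℝ) (P : ℝ → ℝ) : Prop :=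
  ∃ u : ℝ → Fin n → ℝ, Measurable u ∧
    (∀ᵐ t ∂(volume.restrict (Ici (0 : ℝ))),
      (∑ i, u t i) = P t ∧ ∀ i, 0 ≤ u t i ∧ u t i ≤ pbar i) ∧
    ∀ t : ℝ, 0 ≤ t → ∀ i, (∫ s in (0 : ℝ)..t, u s i) ≤ pbar i * x i

/-!
Necessity: on a window `A ⊆ (0, T]` of length `a`, unit `i` delivers at most `p̄ᵢ · min a xᵢ`
(rate cap and energy cap), so `∫_A (P - p) ≤ ∑ᵢ p̄ᵢ · min a xᵢ - p a = ∫_(0,a) (R - p) ≤ Ω(p)`;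
taking `A = (0, T] ∩ {P > p}` and letting `T → ∞` gives `E_P(p) ≤ Ω(p)`.

Sufficiency, by induction on the number of units: the last unit (rate `c`, energy `c y`) serves
the top slice `min c (P - θ)₊` of the request, with the threshold `θ ≥ 0` chosen by the
intermediate value theorem so that the slice uses up the energy `c y` (or `θ = 0` if even the
slice above level `0` needs less). The remainder `P'` is dominated by the capacity `Ω'` of the
other units: for `θ ≤ p`, `E_{P'}(p) ≤ E_P(p + c) ≤ Ω(p + c) ≤ Ω'(p)`, and for `p < θ` the slice
lies above level `p`, so `E_{P'}(p) + c y ≤ E_P(p) ≤ Ω(p) ≤ Ω'(p) + c y`.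
-/

lemma setLIntegral_Ioi_eq_iSup_Ioc (f : ℝ → ℝ≥0∞) :
    ∫⁻ t in Ioi (0 : ℝ), f t = ⨆ k : ℕ, ∫⁻ t in Ioc (0 : ℝ) k, f t := by
  have hmono : Monotone fun k : ℕ => Ioc (0 : ℝ) k :=
    fun _ _ hkl => Ioc_subset_Ioc_right (Nat.cast_le.mpr hkl)
  rw [← setLIntegral_iUnion_of_directed f hmono.directed_le,
    iUnion_Ioc_eq_Ioi_self_iff.mpr fun t _ => exists_nat_ge t]

lemma setLIntegral_ofReal_max_sub_eq {α : Type*} [MeasurableSpace α] {μ : Measure α} {f : α → ℝ}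
    {s : Set α} (hμs : μ s ≠ ⊤) (hfm : Measurable f)
    (hf : IntegrableOn f s μ) (p : ℝ) :
    ∫⁻ t in s, ENNReal.ofReal (max (f t - p) 0) ∂μ =
      ENNReal.ofReal (∫ t in s ∩ {t | p < f t}, f t ∂μ - p * μ.real (s ∩ {t | p < f t})) := by
  have hA : MeasurableSet {t | p < f t} := measurableSet_lt measurable_const hfm
  have hfp : IntegrableOn (fun t => f t - p) s μ := hf.sub (integrableOn_const hμs)
  have hmax : (fun t => max (f t - p) 0) = {t | p < f t}.indicator fun t => f t - p := by
    ext t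
    by_cases ht : p < f t
    · simp [ht, ht.le]
    · simp [ht, not_lt.mp ht]
  rw [← ofReal_integral_eq_lintegral_ofReal hfp.pos_part (ae_of_all _ fun _ => le_max_right _ _),
    hmax, setIntegral_indicator hA, integral_sub (hf.mono_set inter_subset_left)
      ((integrableOn_const hμs).mono_set inter_subset_left), setIntegral_const, smul_eq_mul,
    mul_comm]

lemma setIntegral_le_mul_min {v : ℝ → ℝ} (hv : Measurable v) {c y T : ℝ} (hc : 0 ≤ c)
    (hb : ∀ᵐ t ∂volume.restrict (Ioc 0 T), 0 ≤ v t ∧ v t ≤ c)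
    (hE : ∫ t in (0 : ℝ)..T, v t ≤ c * y) (hT : 0 ≤ T) {A : Set ℝ}
    (hAT : A ⊆ Ioc 0 T) : ∫ t in A, v t ≤ c * min (volume.real A) y := by
  have hint : IntegrableOn v (Ioc 0 T) :=
    Measure.integrableOn_of_bounded measure_Ioc_lt_top.ne hv.aestronglyMeasurable
      (hb.mono fun t ht => (Real.norm_of_nonneg ht.1).trans_le ht.2)
  have hbA := ae_restrict_of_ae_restrict_of_subset hAT hb
  rw [mul_min_of_nonneg _ _ hc]
  refine le_min ?_ ?_
  · calc ∫ t in A, v t ≤ ∫ _ in A, c :=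
          setIntegral_mono_ae_restrict (hint.mono_set hAT)
            (integrableOn_const ((measure_mono hAT).trans_lt measure_Ioc_lt_top).ne)
            (hbA.mono fun _ ht => ht.2)
      _ = c * volume.real A := by rw [setIntegral_const, smul_eq_mul, mul_comm]
  · calc ∫ t in A, v t ≤ ∫ t in Ioc 0 T, v t :=
          setIntegral_mono_set hint (hb.mono fun _ ht => ht.1) hAT.eventuallyLE
      _ ≤ c * y := by rwa [← intervalIntegral.integral_of_le hT]

lemma intervalIntegral_le_of_lintegral_Ioi_le {v : ℝ → ℝ} (hv : Measurable v)
    (hv0 : ∀ t, 0 ≤ v t) {B : ℝ} (hB : 0 ≤ B)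
    (h : ∫⁻ t in Ioi (0 : ℝ), ENNReal.ofReal (v t) ≤ ENNReal.ofReal B) {T : ℝ} (hT : 0 ≤ T) :
    ∫ t in (0 : ℝ)..T, v t ≤ B := by
  rw [intervalIntegral.integral_of_le hT,
    integral_eq_lintegral_of_nonneg_ae (ae_of_all _ hv0) hv.aestronglyMeasurable]
  exact ENNReal.toReal_le_of_le_ofReal hB ((lintegral_mono_set Ioc_subset_Ioi_self).trans h)

lemma Etrans_add_le {P g : ℝ → ℝ} (hP : Measurable P) (hg : ∀ t, 0 ≤ g t) (p : ℝ) :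
    Etrans (fun t => P t + g t) p ≤ Etrans P p + ∫⁻ t in Ioi (0 : ℝ), ENNReal.ofReal (g t) := by
  rw [Etrans, Etrans, ← lintegral_add_left ((hP.sub_const p).max measurable_const).ennreal_ofReal]
  refine lintegral_mono fun t => ?_
  rw [← ENNReal.ofReal_add (le_max_right _ _) (hg t)]
  exact ENNReal.ofReal_le_ofReal <|
    max_le (by linarith [le_max_left (P t - p) 0]) (by linarith [le_max_right (P t - p) 0, hg t])

lemma integrableOn_max_sub_of_Etrans_ne_top {P : ℝ → ℝ} {p : ℝ} (hP : Measurable P)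
    (h : Etrans P p ≠ ⊤) : IntegrableOn (fun t => max (P t - p) 0) (Ioi 0) :=
  ⟨((hP.sub_const p).max measurable_const).aestronglyMeasurable,
    (hasFiniteIntegral_iff_ofReal (ae_of_all _ fun _ => le_max_right _ _)).mpr h.lt_top⟩

lemma Rprof_snoc (n : ℕ) (pbar x : Fin n → ℝ) (c y t : ℝ) :
    Rprof (n + 1) (Fin.snoc pbar c) (Fin.snoc x y) t =
      Rprof n pbar x t + (Ico 0 y).indicator (fun _ => c) t := by
  simp [Rprof, Fin.sum_univ_castSucc]

lemma measurable_Rprof (n : ℕ) (pbar x : Fin n → ℝ) : Measurable (Rprof n pbar x) :=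
  Finset.measurable_sum _ fun _ _ => measurable_const.indicator measurableSet_Ico

lemma lintegral_Ioi_indicator_Ico {c : ℝ} (hc : 0 ≤ c) (y : ℝ) :
    ∫⁻ t in Ioi (0 : ℝ), ENNReal.ofReal ((Ico 0 y).indicator (fun _ => c) t) =
      ENNReal.ofReal (c * y) := by
  have hIoo : Ico 0 y ∩ Ioi 0 = Ioo (0 : ℝ) y := by
    ext t
    simp only [mem_inter_iff, mem_Ico, mem_Ioi, mem_Ioo]
    exact ⟨fun h => ⟨h.2, h.1.2⟩, fun h => ⟨⟨h.1.le, h.2⟩, h.1⟩⟩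
  have hind : ∀ t, ENNReal.ofReal ((Ico 0 y).indicator (fun _ => c) t) =
      (Ico 0 y).indicator (fun _ => ENNReal.ofReal c) t :=
    fun t => by by_cases ht : t ∈ Ico 0 y <;> simp [ht]
  simp_rw [hind]
  rw [lintegral_indicator_const measurableSet_Ico, Measure.restrict_apply measurableSet_Ico, hIoo,
    Real.volume_Ioo, sub_zero, ENNReal.ofReal_mul hc]

lemma capacity_snoc_le {n : ℕ} (pbar x : Fin n → ℝ) {c : ℝ} (hc : 0 ≤ c) (y p : ℝ) :
    capacity (n + 1) (Fin.snoc pbar c) (Fin.snoc x y) p ≤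
      capacity n pbar x p + ENNReal.ofReal (c * y) := by
  rw [capacity, funext (Rprof_snoc n pbar x c y), ← lintegral_Ioi_indicator_Ico hc y]
  exact Etrans_add_le (measurable_Rprof n pbar x) (fun _ => indicator_nonneg (fun _ _ => hc) _) p

lemma capacity_snoc_add_le {n : ℕ} (pbar x : Fin n → ℝ) {c : ℝ} (hc : 0 ≤ c) (y p : ℝ) :
    capacity (n + 1) (Fin.snoc pbar c) (Fin.snoc x y) (p + c) ≤ capacity n pbar x p := by
  refine lintegral_mono fun t => ENNReal.ofReal_le_ofReal <| max_le_max_right 0 ?_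
  have : (Ico 0 y).indicator (fun _ => c) t ≤ c :=
    indicator_le' (fun _ _ => le_rfl) (fun _ _ => hc) t
  rw [Rprof_snoc]
  linarith

lemma capacity_fin_zero (pbar x : Fin 0 → ℝ) {p : ℝ} (hp : 0 ≤ p) : capacity 0 pbar x p = 0 := by
  simp [capacity, Etrans, Rprof, hp]

lemma capacity_lt_top {n : ℕ} {pbar : Fin n → ℝ} (hp : ∀ i, 0 ≤ pbar i) (x : Fin n → ℝ) {p : ℝ}
    (hp0 : 0 ≤ p) : capacity n pbar x p < ⊤ := by
  induction n with
  | zero => simp [capacity_fin_zero pbar x hp0]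
  | succ n ih =>
    rw [← Fin.snoc_init_self pbar, ← Fin.snoc_init_self x]
    refine (capacity_snoc_le _ _ (hp _) _ p).trans_lt ?_
    exact ENNReal.add_lt_top.mpr ⟨ih (fun _ => hp _) _, ENNReal.ofReal_lt_top⟩

lemma capacity_sum_eq_zero {n : ℕ} {pbar : Fin n → ℝ} (hp : ∀ i, 0 ≤ pbar i) (x : Fin n → ℝ) :
    capacity n pbar x (∑ i, pbar i) = 0 := by
  have hR : ∀ t, Rprof n pbar x t ≤ ∑ i, pbar i := fun t =>
    Finset.sum_le_sum fun i _ => indicator_le' (fun _ _ => le_rfl) (fun _ _ => hp i) t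
  simp [capacity, Etrans, hR]

def maxWindowEnergy (n : ℕ) (pbar x : Fin n → ℝ) (a : ℝ) : ℝ := ∑ i, pbar i * min a (x i)

lemma integral_Ioo_Rprof {n : ℕ} (pbar : Fin n → ℝ) {x : Fin n → ℝ} (hx : ∀ i, 0 ≤ x i) {a : ℝ}
    (ha : 0 ≤ a) : ∫ t in Ioo 0 a, Rprof n pbar x t = maxWindowEnergy n pbar x a := by
  have hinter : ∀ i, Ioo 0 a ∩ Ico 0 (x i) = Ioo 0 (min a (x i)) := fun i => by
    ext t
    simp only [mem_inter_iff, mem_Ioo, mem_Ico, lt_min_iff]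
    exact ⟨fun h => ⟨h.1.1, h.1.2, h.2.2⟩, fun h => ⟨⟨h.1, h.2.1⟩, h.1.le, h.2.2⟩⟩
  simp only [Rprof]
  rw [integral_finsetSum _ fun i _ => by
    exact (integrableOn_const measure_Ioo_lt_top.ne).indicator measurableSet_Ico]
  refine Finset.sum_congr rfl fun i _ => ?_
  rw [setIntegral_indicator measurableSet_Ico, hinter, setIntegral_const,
    Real.volume_real_Ioo_of_le (le_min ha (hx i)), sub_zero, smul_eq_mul, mul_comm]

lemma ofReal_maxWindowEnergy_sub_le_capacity {n : ℕ} (pbar : Fin n → ℝ) {x : Fin n → ℝ}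
    (hx : ∀ i, 0 ≤ x i) {a : ℝ} (ha : 0 ≤ a) (p : ℝ) :
    ENNReal.ofReal (maxWindowEnergy n pbar x a - p * a) ≤ capacity n pbar x p := by
  have hR : IntegrableOn (Rprof n pbar x) (Ioo 0 a) :=
    integrable_finsetSum _ fun i _ =>
      (integrableOn_const measure_Ioo_lt_top.ne).indicator measurableSet_Ico
  have hRp : IntegrableOn (fun t => Rprof n pbar x t - p) (Ioo 0 a) :=
    hR.sub (integrableOn_const measure_Ioo_lt_top.ne)
  calc ENNReal.ofReal (maxWindowEnergy n pbar x a - p * a)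
      = ENNReal.ofReal (∫ t in Ioo 0 a, (Rprof n pbar x t - p)) := by
        rw [integral_sub hR (integrableOn_const measure_Ioo_lt_top.ne),
          integral_Ioo_Rprof pbar hx ha, setIntegral_const, Real.volume_real_Ioo_of_le ha, sub_zero, smul_eq_mul, mul_comm]
    _ ≤ ENNReal.ofReal (∫ t in Ioo 0 a, max (Rprof n pbar x t - p) 0) :=
        ENNReal.ofReal_le_ofReal
          (setIntegral_mono hRp hRp.pos_part fun _ => le_max_left _ _)
    _ = ∫⁻ t in Ioo 0 a, ENNReal.ofReal (max (Rprof n pbar x t - p) 0) :=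
        ofReal_integral_eq_lintegral_ofReal hRp.pos_part (ae_of_all _ fun _ => le_max_right _ _)
    _ ≤ capacity n pbar x p := lintegral_mono_set Ioo_subset_Ioi_self

lemma setIntegral_sum_le_maxWindowEnergy {n : ℕ} {pbar x : Fin n → ℝ} (hp : ∀ i, 0 ≤ pbar i)
    {u : ℝ → Fin n → ℝ} (hu : Measurable u)
    (hb : ∀ᵐ t ∂volume.restrict (Ici 0), ∀ i, 0 ≤ u t i ∧ u t i ≤ pbar i)
    (hE : ∀ t, 0 ≤ t → ∀ i, ∫ s in (0 : ℝ)..t, u s i ≤ pbar i * x i) {T : ℝ} (hT : 0 ≤ T)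
    {A : Set ℝ} (hAT : A ⊆ Ioc 0 T) :
    ∫ t in A, ∑ i, u t i ≤ maxWindowEnergy n pbar x (volume.real A) := by
  have hbT := ae_restrict_of_ae_restrict_of_subset
    (Ioc_subset_Ioi_self.trans Ioi_subset_Ici_self : Ioc (0 : ℝ) T ⊆ Ici 0) hb
  have hint : ∀ i, IntegrableOn (fun t => u t i) A := fun i =>
    Measure.integrableOn_of_bounded ((measure_mono hAT).trans_lt measure_Ioc_lt_top).ne
      (measurable_pi_iff.mp hu i).aestronglyMeasurable
      ((ae_restrict_of_ae_restrict_of_subset hAT hbT).mono fun t ht =>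
        (Real.norm_of_nonneg (ht i).1).trans_le (ht i).2)
  rw [integral_finsetSum _ fun i _ => hint i]
  exact Finset.sum_le_sum fun i _ => setIntegral_le_mul_min (measurable_pi_iff.mp hu i) (hp i)
    (hbT.mono fun t ht => ht i) (hE T hT i) hT hAT

theorem Feasible.Etrans_le_capacity {n : ℕ} {pbar x : Fin n → ℝ} {P : ℝ → ℝ}
    (h : Feasible n pbar x P) (hp : ∀ i, 0 ≤ pbar i) (hx : ∀ i, 0 ≤ x i) (p : ℝ) :
    Etrans P p ≤ capacity n pbar x p := by
  obtain ⟨u, hu, hae, hE⟩ := h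
  set Q : ℝ → ℝ := fun t => ∑ i, u t i
  have hQ : Measurable Q := Finset.measurable_sum _ fun i _ => measurable_pi_iff.mp hu i
  have hPQ : Etrans P p = Etrans Q p :=
    setLIntegral_congr_fun_ae measurableSet_Ioi <|
      (ae_restrict_iff' measurableSet_Ici).mp hae |>.mono fun t ht ht0 => by
        simp only [Q, (ht (mem_Ici_of_Ioi ht0)).1]
  rw [hPQ, Etrans, setLIntegral_Ioi_eq_iSup_Ioc]
  refine iSup_le fun k => ?_
  have hbQ : ∀ᵐ t ∂volume.restrict (Ioc 0 (k : ℝ)), ‖Q t‖ ≤ ∑ i, pbar i :=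
    (ae_restrict_of_ae_restrict_of_subset (Ioc_subset_Ioi_self.trans Ioi_subset_Ici_self)
      hae).mono fun t ht => by
        rw [Real.norm_of_nonneg (Finset.sum_nonneg fun i _ => (ht.2 i).1)]
        exact Finset.sum_le_sum fun i _ => (ht.2 i).2
  rw [setLIntegral_ofReal_max_sub_eq measure_Ioc_lt_top.ne hQ
    (Measure.integrableOn_of_bounded measure_Ioc_lt_top.ne hQ.aestronglyMeasurable hbQ)]
  set A := Ioc 0 (k : ℝ) ∩ {t | p < Q t}
  have hwindow := setIntegral_sum_le_maxWindowEnergy hp hu (hae.mono fun t ht => ht.2) hE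
    k.cast_nonneg (inter_subset_left : A ⊆ _)
  calc ENNReal.ofReal ((∫ t in A, Q t) - p * volume.real A)
      ≤ ENNReal.ofReal (maxWindowEnergy n pbar x (volume.real A) - p * volume.real A) :=
        ENNReal.ofReal_le_ofReal (by linarith)
    _ ≤ capacity n pbar x p := ofReal_maxWindowEnergy_sub_le_capacity pbar hx measureReal_nonneg p

def topSlice (c θ r : ℝ) : ℝ := min c (max (r - θ) 0)

section topSlice

variable {c θ p r : ℝ}

lemma topSlice_nonneg (hc : 0 ≤ c) : 0 ≤ topSlice c θ r := le_min hc (le_max_right _ _)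

lemma topSlice_le : topSlice c θ r ≤ c := min_le_left _ _

lemma topSlice_le_max_sub : topSlice c θ r ≤ max (r - θ) 0 := min_le_right _ _

lemma continuous_topSlice : Continuous fun θ => topSlice c θ r := by
  unfold topSlice; fun_prop

lemma Measurable.topSlice {P : ℝ → ℝ} (hP : Measurable P) :
    Measurable fun t => topSlice c θ (P t) :=
  measurable_const.min ((hP.sub_const θ).max measurable_const)

lemma max_sub_topSlice_sub_le (hθp : θ ≤ p) :
    max (r - topSlice c θ r - p) 0 ≤ max (r - (p + c)) 0 := by
  simp only [topSlice, max_def, min_def]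
  split_ifs <;> linarith

lemma max_sub_topSlice_sub_add_topSlice_le (hpθ : p ≤ θ) :
    max (r - topSlice c θ r - p) 0 + topSlice c θ r ≤ max (r - p) 0 := by
  simp only [topSlice, max_def, min_def]
  split_ifs <;> linarith

end topSlice

lemma Etrans_sub_topSlice_le {P : ℝ → ℝ} {c θ p : ℝ} (hθp : θ ≤ p) :
    Etrans (fun t => P t - topSlice c θ (P t)) p ≤ Etrans P (p + c) :=
  lintegral_mono fun _ => ENNReal.ofReal_le_ofReal (max_sub_topSlice_sub_le hθp)

lemma Etrans_sub_topSlice_add_le {P : ℝ → ℝ} (hP : Measurable P) {c θ p : ℝ} (hc : 0 ≤ c)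
    (hpθ : p ≤ θ) :
    Etrans (fun t => P t - topSlice c θ (P t)) p +
        ∫⁻ t in Ioi (0 : ℝ), ENNReal.ofReal (topSlice c θ (P t)) ≤ Etrans P p := by
  have hm : Measurable fun t => P t - topSlice c θ (P t) := hP.sub hP.topSlice
  rw [Etrans, Etrans, ← lintegral_add_left ((hm.sub_const p).max measurable_const).ennreal_ofReal]
  refine lintegral_mono fun t => ?_
  rw [← ENNReal.ofReal_add (le_max_right _ _) (topSlice_nonneg hc)]
  exact ENNReal.ofReal_le_ofReal (max_sub_topSlice_sub_add_topSlice_le hpθ)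

lemma lintegral_topSlice_le_Etrans (P : ℝ → ℝ) (c θ : ℝ) :
    ∫⁻ t in Ioi (0 : ℝ), ENNReal.ofReal (topSlice c θ (P t)) ≤ Etrans P θ :=
  lintegral_mono fun _ => ENNReal.ofReal_le_ofReal topSlice_le_max_sub

lemma exists_topSlice_threshold {P : ℝ → ℝ} (hP : Measurable P) {c E M : ℝ} (hc : 0 ≤ c)
    (hE : 0 ≤ E) (hfin : Etrans P 0 ≠ ⊤) (hM : 0 ≤ M) (hPM : Etrans P M = 0) :
    ∃ θ, 0 ≤ θ ∧ ∫⁻ t in Ioi (0 : ℝ), ENNReal.ofReal (topSlice c θ (P t)) ≤ ENNReal.ofReal E ∧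
      (0 < θ → ∫⁻ t in Ioi (0 : ℝ), ENNReal.ofReal (topSlice c θ (P t)) = ENNReal.ofReal E) := by
  set f : ℝ → ℝ := fun θ => ∫ t in Ioi (0 : ℝ), topSlice c θ (P t)
  have hbound : ∀ θ, 0 ≤ θ → ∀ t, ‖topSlice c θ (P t)‖ ≤ max (P t - 0) 0 := fun θ hθ t => by
    rw [Real.norm_of_nonneg (topSlice_nonneg hc)]
    exact topSlice_le_max_sub.trans (max_le_max_right 0 (by linarith))
  have hint := integrableOn_max_sub_of_Etrans_ne_top hP hfin
  have hlint : ∀ θ, 0 ≤ θ →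
      ∫⁻ t in Ioi (0 : ℝ), ENNReal.ofReal (topSlice c θ (P t)) = ENNReal.ofReal (f θ) :=
    fun θ hθ => (ofReal_integral_eq_lintegral_ofReal
      (hint.mono' hP.topSlice.aestronglyMeasurable (ae_of_all _ (hbound θ hθ)))
      (ae_of_all _ fun _ => topSlice_nonneg hc)).symm
  have hcont : ContinuousOn f (Icc 0 M) :=
    continuousOn_of_dominated (fun _ _ => hP.topSlice.aestronglyMeasurable)
      (fun θ hθ => ae_of_all _ (hbound θ hθ.1)) hint
      (ae_of_all _ fun _ => continuous_topSlice.continuousOn)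
  have hfM : f M ≤ 0 := by
    rw [← ENNReal.ofReal_eq_zero, ← hlint M hM, ← nonpos_iff_eq_zero, ← hPM]
    exact lintegral_topSlice_le_Etrans P c M
  rcases le_or_gt (f 0) E with h0 | h0
  · exact ⟨0, le_rfl, (hlint 0 le_rfl).trans_le (ENNReal.ofReal_le_ofReal h0),
      fun h => (lt_irrefl 0 h).elim⟩
  · obtain ⟨θ, hθ, hfθ⟩ := intermediate_value_Icc' hM hcont ⟨hfM.trans hE, h0.le⟩
    exact ⟨θ, hθ.1, (hlint θ hθ.1).trans_le (ENNReal.ofReal_le_ofReal hfθ.le),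
      fun _ => by rw [hlint θ hθ.1, hfθ]⟩

lemma feasible_fin_zero_of_Etrans_eq_zero {P : ℝ → ℝ} (pbar x : Fin 0 → ℝ) (hP : Measurable P)
    (hP0 : ∀ t, 0 ≤ t → 0 ≤ P t) (h : Etrans P 0 = 0) : Feasible 0 pbar x P := by
  refine ⟨fun _ _ => 0, measurable_const, ?_, fun _ _ i => i.elim0⟩
  have hzero := (lintegral_eq_zero_iff ((hP.sub_const 0).max measurable_const).ennreal_ofReal).mp h
  rw [← Measure.restrict_congr_set Ioi_ae_eq_Ici]
  filter_upwards [hzero, ae_restrict_mem measurableSet_Ioi] with t ht ht0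
  simp only [Pi.zero_apply, ENNReal.ofReal_eq_zero, sub_zero, max_le_iff] at ht
  simp [le_antisymm ht.1 (hP0 t ht0.le)]

lemma Feasible.snoc {n : ℕ} {pbar x : Fin n → ℝ} {P v : ℝ → ℝ} {c y : ℝ}
    (h : Feasible n pbar x fun t => P t - v t) (hv : Measurable v) (hv0 : ∀ t, 0 ≤ v t)
    (hvc : ∀ t, v t ≤ c) (hvE : ∀ T, 0 ≤ T → ∫ t in (0 : ℝ)..T, v t ≤ c * y) :
    Feasible (n + 1) (Fin.snoc pbar c) (Fin.snoc x y) P := by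
  obtain ⟨u, hu, hae, hE⟩ := h
  refine ⟨fun t => Fin.snoc (u t) (v t), ?_, ?_, fun T hT => Fin.forall_fin_succ'.mpr ?_⟩
  · exact measurable_pi_iff.mpr <| Fin.forall_fin_succ'.mpr
      ⟨fun i => by simpa using measurable_pi_iff.mp hu i, by simpa using hv⟩
  · filter_upwards [hae] with t ht
    refine ⟨by simp [Fin.sum_univ_castSucc, ht.1], Fin.forall_fin_succ'.mpr ?_⟩
    simpa using ⟨ht.2, hv0 t, hvc t⟩
  · simpa using ⟨hE T hT, hvE T hT⟩

lemma Etrans_sub_topSlice_le_capacity {n : ℕ} {pbar x : Fin n → ℝ} {P : ℝ → ℝ} {c y θ : ℝ}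
    (hP : Measurable P) (hc : 0 ≤ c)
    (hθ : 0 < θ → ∫⁻ t in Ioi (0 : ℝ), ENNReal.ofReal (topSlice c θ (P t)) = ENNReal.ofReal (c * y))
    (hdom : ∀ p, 0 ≤ p → Etrans P p ≤ capacity (n + 1) (Fin.snoc pbar c) (Fin.snoc x y) p)
    {p : ℝ} (hp : 0 ≤ p) :
    Etrans (fun t => P t - topSlice c θ (P t)) p ≤ capacity n pbar x p := by
  rcases le_or_gt θ p with hθp | hpθ
  · calc _ ≤ Etrans P (p + c) := Etrans_sub_topSlice_le hθp
      _ ≤ capacity (n + 1) (Fin.snoc pbar c) (Fin.snoc x y) (p + c) := hdom _ (by positivity)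
      _ ≤ capacity n pbar x p := capacity_snoc_add_le pbar x hc y p
  · refine (ENNReal.add_le_add_iff_right (ENNReal.ofReal_ne_top (r := c * y))).mp ?_
    calc _ = Etrans (fun t => P t - topSlice c θ (P t)) p +
          ∫⁻ t in Ioi (0 : ℝ), ENNReal.ofReal (topSlice c θ (P t)) := by
          rw [hθ (hp.trans_lt hpθ)]
      _ ≤ Etrans P p := Etrans_sub_topSlice_add_le hP hc hpθ.le
      _ ≤ capacity (n + 1) (Fin.snoc pbar c) (Fin.snoc x y) p := hdom p hp
      _ ≤ capacity n pbar x p + ENNReal.ofReal (c * y) := capacity_snoc_le pbar x hc y p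

theorem feasible_of_Etrans_le_capacity {n : ℕ} {pbar x : Fin n → ℝ} (hp : ∀ i, 0 ≤ pbar i)
    (hx : ∀ i, 0 ≤ x i) {P : ℝ → ℝ} (hP : Measurable P) (hP0 : ∀ t, 0 ≤ t → 0 ≤ P t)
    (hdom : ∀ p, 0 ≤ p → Etrans P p ≤ capacity n pbar x p) : Feasible n pbar x P := by
  induction n generalizing P with
  | zero => exact feasible_fin_zero_of_Etrans_eq_zero pbar x hP hP0 (nonpos_iff_eq_zero.mp
      ((hdom 0 le_rfl).trans_eq (capacity_fin_zero pbar x le_rfl)))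
  | succ n ih =>
    have hfin : Etrans P 0 ≠ ⊤ := ((hdom 0 le_rfl).trans_lt (capacity_lt_top hp x le_rfl)).ne
    have hPM : Etrans P (∑ i, pbar i) = 0 := nonpos_iff_eq_zero.mp
      ((hdom _ (Finset.sum_nonneg fun i _ => hp i)).trans_eq (capacity_sum_eq_zero hp x))
    rw [← Fin.snoc_init_self pbar, ← Fin.snoc_init_self x] at hdom ⊢
    set c := pbar (Fin.last n)
    set y := x (Fin.last n)
    have hc : 0 ≤ c := hp _
    obtain ⟨θ, hθ0, hθE, hθ⟩ := exists_topSlice_threshold hP hc (mul_nonneg hc (hx _)) hfin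
      (Finset.sum_nonneg fun i _ => hp i) hPM
    have hrest : Feasible n (Fin.init pbar) (Fin.init x) fun t => P t - topSlice c θ (P t) :=
      ih (fun _ => hp _) (fun _ => hx _) (hP.sub hP.topSlice)
        (fun t ht => sub_nonneg.mpr (topSlice_le_max_sub.trans (max_le (by linarith) (hP0 t ht))))
        (fun p hp => Etrans_sub_topSlice_le_capacity hP hc hθ hdom hp)
    exact hrest.snoc hP.topSlice (fun _ => topSlice_nonneg hc) (fun _ => topSlice_le)
      fun T hT => intervalIntegral_le_of_lintegral_Ioi_le hP.topSlice
        (fun _ => topSlice_nonneg hc) (mul_nonneg hc (hx _)) hθE hT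

theorem feasible_iff_Etrans_le_capacity_general
    (n : ℕ) (pbar x : Fin n → ℝ)
    (hp : ∀ i, 0 < pbar i) (hx : ∀ i, 0 ≤ x i)
    (P : ℝ → ℝ) (hPm : Measurable P) (hPnn : ∀ t, 0 ≤ t → 0 ≤ P t) :
    Feasible n pbar x P ↔ ∀ p : ℝ, 0 ≤ p → Etrans P p ≤ capacity n pbar x p :=
  ⟨fun h p _ => h.Etrans_le_capacity (fun i => (hp i).le) hx p,
    feasible_of_Etrans_le_capacity (fun i => (hp i).le) hx hPm hPnn⟩

/-- A request profile is feasible for the fleet iff its E-p transform is dominated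
pointwise by the capacity curve of the fleet. -/
theorem feasible_iff_Etrans_le_capacity
    (n : ℕ) (hn : 1 ≤ n) (pbar x : Fin n → ℝ)
    (hp : ∀ i, 0 < pbar i) (hx : ∀ i, 0 ≤ x i)
    (P : ℝ → ℝ) (hPm : Measurable P) (hPnn : ∀ t, 0 ≤ t → 0 ≤ P t) :
    Feasible n pbar x P ↔ ∀ p : ℝ, 0 ≤ p → Etrans P p ≤ capacity n pbar x p :=
  feasible_iff_Etrans_le_capacity_general n pbar x hp hx P hPm hPnn
end

section
/- (Maximum feasible pulse) Let M > 0 and T > 0. The pulse profile P(t) = M·1_{[0,T)}(t) is feasible for the fleet (p̄, x) if and only if T·max{M − p, 0} ≤ Ω_{p̄,x}(p) for all p ≥ 0. -/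
/-!
Both sides are equivalent to `M T ≤ S(T) := Σᵢ p̄ᵢ min(T, xᵢ)`, the most energy the fleet can
deliver during `[0, T]`. Integrating a feasible dispatch over `(0, T]` gives `M T ≤ S(T)`, and
conversely the split of the pulse among the units in proportion to `p̄ᵢ min(T, xᵢ)` is feasible.
On the capacity side, `Ω(p) ≥ ∫₀ᵀ (R − p) = S(T) − p T` for every `p`, with equality at the level
`p₀ = Σ_{xᵢ > T} p̄ᵢ` because `R ≥ p₀` on `(0, T]` and `R ≤ p₀` after `T`; so the capacity bound
at `p₀` alone already forces `M T ≤ S(T)`.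
-/

open MeasureTheory Set
open scoped ENNReal

theorem setIntegral_Ioc_indicator_Ico_const (c : ℝ) {T a : ℝ} (hT : 0 ≤ T) (ha : 0 ≤ a) :
    ∫ t in Ioc 0 T, (Ico 0 a).indicator (fun _ => c) t = c * min T a := by
  have hinter : Ioo 0 T ∩ Ico 0 a = Ioo 0 (min T a) := by
    ext t
    simp only [mem_inter_iff, mem_Ioo, mem_Ico, lt_min_iff]
    exact ⟨fun ⟨⟨h0, hT⟩, _, ha⟩ => ⟨h0, hT, ha⟩, fun ⟨h0, hT, ha⟩ => ⟨⟨h0, hT⟩, h0.le, ha⟩⟩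
  rw [integral_Ioc_eq_integral_Ioo, setIntegral_indicator measurableSet_Ico, hinter,
    setIntegral_const, Real.volume_real_Ioo_of_le (le_min hT ha), smul_eq_mul, sub_zero, mul_comm]

noncomputable def pulse (M T : ℝ) : ℝ → ℝ :=
  (Ico 0 T).indicator fun _ => M

section Fleet

variable {n : ℕ} {pbar x : Fin n → ℝ}

noncomputable def deliverableEnergy (pbar x : Fin n → ℝ) (T : ℝ) : ℝ :=
  ∑ i, pbar i * min T (x i)

noncomputable def sustainedPower (pbar x : Fin n → ℝ) (T : ℝ) : ℝ :=
  ∑ i with T < x i, pbar i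

theorem integrableOn_Rprof (pbar x : Fin n → ℝ) (T : ℝ) :
    IntegrableOn (Rprof n pbar x) (Ioc 0 T) :=
  integrable_finsetSum _ fun i _ => (integrable_const (pbar i)).indicator measurableSet_Ico

theorem setIntegral_Rprof_sub (hx : ∀ i, 0 ≤ x i) {T : ℝ} (hT : 0 ≤ T) (p : ℝ) :
    ∫ t in Ioc 0 T, (Rprof n pbar x t - p) = deliverableEnergy pbar x T - p * T := by
  have hR : ∫ t in Ioc 0 T, Rprof n pbar x t = deliverableEnergy pbar x T := by
    simp only [Rprof]
    rw [integral_finsetSum _ fun i _ =>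
      (integrable_const (pbar i)).indicator measurableSet_Ico]
    exact Finset.sum_congr rfl fun i _ => setIntegral_Ioc_indicator_Ico_const _ hT (hx i)
  rw [integral_sub (integrableOn_Rprof pbar x T) (integrableOn_const (by simp)), hR,
    setIntegral_const, Real.volume_real_Ioc_of_le hT, smul_eq_mul, sub_zero, mul_comm T]

theorem sustainedPower_le_Rprof (hp : ∀ i, 0 ≤ pbar i) {T t : ℝ} (ht₀ : 0 ≤ t) (htT : t ≤ T) :
    sustainedPower pbar x T ≤ Rprof n pbar x t := by
  rw [sustainedPower, Rprof, Finset.sum_filter]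
  refine Finset.sum_le_sum fun i _ => ?_
  split_ifs with h
  · rw [indicator_of_mem (mem_Ico.2 ⟨ht₀, htT.trans_lt h⟩)]
  · exact indicator_nonneg (fun _ _ => hp i) t

theorem Rprof_le_sustainedPower (hp : ∀ i, 0 ≤ pbar i) {T t : ℝ} (hTt : T ≤ t) :
    Rprof n pbar x t ≤ sustainedPower pbar x T := by
  rw [sustainedPower, Rprof, Finset.sum_filter]
  refine Finset.sum_le_sum fun i _ => ?_
  split_ifs with h
  · exact indicator_apply_le' (fun _ => le_rfl) fun _ => hp i
  · exact (indicator_of_notMem (fun ht : t ∈ Ico 0 (x i) => h (hTt.trans_lt ht.2)) _).le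

theorem sustainedPower_mul_le_deliverableEnergy (hp : ∀ i, 0 ≤ pbar i) (hx : ∀ i, 0 ≤ x i)
    {T : ℝ} (hT : 0 ≤ T) : sustainedPower pbar x T * T ≤ deliverableEnergy pbar x T := by
  rw [sustainedPower, Finset.sum_filter, Finset.sum_mul, deliverableEnergy]
  refine Finset.sum_le_sum fun i _ => ?_
  split_ifs with h
  · rw [min_eq_left h.le]
  · rw [zero_mul]
    exact mul_nonneg (hp i) (le_min hT (hx i))

theorem ofReal_deliverableEnergy_sub_le_capacity (hx : ∀ i, 0 ≤ x i) {T : ℝ} (hT : 0 ≤ T)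
    (p : ℝ) : ENNReal.ofReal (deliverableEnergy pbar x T - p * T) ≤ capacity n pbar x p := by
  have hint : IntegrableOn (fun t => Rprof n pbar x t - p) (Ioc 0 T) :=
    (integrableOn_Rprof pbar x T).sub (integrableOn_const (by simp))
  calc ENNReal.ofReal (deliverableEnergy pbar x T - p * T)
      = ENNReal.ofReal (∫ t in Ioc 0 T, (Rprof n pbar x t - p)) := by
        rw [setIntegral_Rprof_sub hx hT]
    _ ≤ ENNReal.ofReal (∫ t in Ioc 0 T, max (Rprof n pbar x t - p) 0) :=
        ENNReal.ofReal_le_ofReal (integral_mono hint hint.pos_part fun _ => le_max_left _ _)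
    _ = ∫⁻ t in Ioc 0 T, ENNReal.ofReal (max (Rprof n pbar x t - p) 0) :=
        ofReal_integral_eq_lintegral_ofReal hint.pos_part (ae_of_all _ fun _ => le_max_right _ _)
    _ ≤ capacity n pbar x p := lintegral_mono_set Ioc_subset_Ioi_self

theorem capacity_sustainedPower (hp : ∀ i, 0 ≤ pbar i) (hx : ∀ i, 0 ≤ x i) {T : ℝ}
    (hT : 0 ≤ T) :
    capacity n pbar x (sustainedPower pbar x T) =
      ENNReal.ofReal (deliverableEnergy pbar x T - sustainedPower pbar x T * T) := by
  set p₀ := sustainedPower pbar x T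
  have hint : IntegrableOn (fun t => Rprof n pbar x t - p₀) (Ioc 0 T) :=
    (integrableOn_Rprof pbar x T).sub (integrableOn_const (by simp))
  have hbefore : ∀ t ∈ Ioc 0 T, 0 ≤ Rprof n pbar x t - p₀ := fun t ht =>
    sub_nonneg.2 (sustainedPower_le_Rprof hp ht.1.le ht.2)
  have hafter : ∫⁻ t in Ioi T, ENNReal.ofReal (max (Rprof n pbar x t - p₀) 0) = 0 :=
    (setLIntegral_congr_fun measurableSet_Ioi fun t (ht : T < t) => by
      rw [max_eq_right (sub_nonpos.2 (Rprof_le_sustainedPower hp ht.le)), ENNReal.ofReal_zero]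
      ).trans lintegral_zero
  rw [capacity, Etrans, ← Ioc_union_Ioi_eq_Ioi hT,
    lintegral_union measurableSet_Ioi Ioc_disjoint_Ioi_same, hafter, add_zero,
    ← setIntegral_Rprof_sub hx hT,
    ofReal_integral_eq_lintegral_ofReal hint (ae_restrict_of_forall_mem measurableSet_Ioc hbefore)]
  exact setLIntegral_congr_fun measurableSet_Ioc fun t ht => by rw [max_eq_left (hbefore t ht)]

theorem pulse_energy_le_capacity_iff (hp : ∀ i, 0 ≤ pbar i) (hx : ∀ i, 0 ≤ x i) {M T : ℝ}
    (hT : 0 ≤ T) :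
    (∀ p : ℝ, 0 ≤ p → ENNReal.ofReal (T * max (M - p) 0) ≤ capacity n pbar x p) ↔
      M * T ≤ deliverableEnergy pbar x T := by
  constructor
  · intro h
    have hp₀ : 0 ≤ sustainedPower pbar x T := Finset.sum_nonneg fun i _ => hp i
    have hle := sustainedPower_mul_le_deliverableEnergy hp hx hT
    have hcap := h _ hp₀
    rw [capacity_sustainedPower hp hx hT, ENNReal.ofReal_le_ofReal_iff (by linarith)] at hcap
    rcases le_total M (sustainedPower pbar x T) with hM | hM
    · exact (mul_le_mul_of_nonneg_right hM hT).trans hle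
    · rw [max_eq_left (sub_nonneg.2 hM)] at hcap
      linarith
  · intro h p _
    refine le_trans (ENNReal.ofReal_le_ofReal_iff'.2 ?_)
      (ofReal_deliverableEnergy_sub_le_capacity hx hT p)
    rcases le_total p M with hpM | hMp
    · left
      rw [max_eq_left (sub_nonneg.2 hpM)]
      linarith
    · right
      rw [max_eq_right (sub_nonpos.2 hMp), mul_zero]

theorem Feasible.mul_le_deliverableEnergy {M T : ℝ} (hT : 0 ≤ T)
    (h : Feasible n pbar x (pulse M T)) : M * T ≤ deliverableEnergy pbar x T := by
  obtain ⟨u, hu, hae, henergy⟩ := h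
  have hae' : ∀ᵐ t ∂(volume.restrict (Ioc 0 T)),
      ∑ i, u t i = pulse M T t ∧ ∀ i, 0 ≤ u t i ∧ u t i ≤ pbar i :=
    ae_restrict_of_ae_restrict_of_subset (fun t ht => mem_Ici.2 ht.1.le) hae
  have hint : ∀ i, IntegrableOn (fun t => u t i) (Ioc 0 T) := fun i =>
    (integrable_const (pbar i)).mono' ((measurable_pi_apply i).comp hu).aestronglyMeasurable
      (by filter_upwards [hae'] with t ht using
        (Real.norm_of_nonneg (ht.2 i).1).trans_le (ht.2 i).2)
  have hunit : ∀ i, ∫ t in Ioc 0 T, u t i ≤ pbar i * min T (x i) := fun i => by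
    have hrate : ∫ t in Ioc 0 T, u t i ≤ pbar i * T := by
      calc ∫ t in Ioc 0 T, u t i ≤ ∫ _ in Ioc 0 T, pbar i :=
            integral_mono_ae (hint i) (integrableOn_const (by simp))
              (by filter_upwards [hae'] with t ht using (ht.2 i).2)
        _ = pbar i * T := by
          rw [setIntegral_const, Real.volume_real_Ioc_of_le hT, smul_eq_mul, sub_zero, mul_comm]
    have hstore : ∫ t in Ioc 0 T, u t i ≤ pbar i * x i := by
      rw [← intervalIntegral.integral_of_le hT]
      exact henergy T hT i
    rcases min_cases T (x i) with ⟨hmin, _⟩ | ⟨hmin, _⟩ <;> rw [hmin] <;> assumption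
  calc M * T = ∫ t in Ioc 0 T, pulse M T t := by
        rw [pulse, setIntegral_Ioc_indicator_Ico_const M hT hT, min_self]
    _ = ∑ i, ∫ t in Ioc 0 T, u t i := by
        rw [← integral_finsetSum _ fun i _ => hint i]
        exact integral_congr_ae (by filter_upwards [hae'] with t ht using ht.1.symm)
    _ ≤ deliverableEnergy pbar x T := Finset.sum_le_sum fun i _ => hunit i

theorem feasible_pulse_of_split {M T : ℝ} (hT : 0 ≤ T) (c : Fin n → ℝ)
    (hc : ∀ i, 0 ≤ c i ∧ c i ≤ pbar i) (hcT : ∀ i, c i * T ≤ pbar i * x i)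
    (hsum : ∑ i, c i = M) : Feasible n pbar x (pulse M T) := by
  refine ⟨fun t i => (Ico 0 T).indicator (fun _ => c i) t,
    measurable_pi_lambda _ fun i => measurable_const.indicator measurableSet_Ico,
    ae_of_all _ fun t => ⟨?_, fun i => ⟨?_, ?_⟩⟩, fun t ht i => ?_⟩
  · by_cases ht : t ∈ Ico 0 T <;> simp [pulse, ht, hsum]
  · exact indicator_nonneg (fun _ _ => (hc i).1) t
  · exact indicator_apply_le' (fun _ => (hc i).2) fun _ => (hc i).1.trans (hc i).2
  · rw [intervalIntegral.integral_of_le ht, setIntegral_Ioc_indicator_Ico_const _ ht hT]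
    calc c i * min t T ≤ c i * T := mul_le_mul_of_nonneg_left (min_le_right _ _) (hc i).1
      _ ≤ pbar i * x i := hcT i

theorem feasible_pulse_of_mul_le_deliverableEnergy (hp : ∀ i, 0 ≤ pbar i)
    (hx : ∀ i, 0 ≤ x i) {M T : ℝ} (hM : 0 < M) (hT : 0 < T)
    (h : M * T ≤ deliverableEnergy pbar x T) : Feasible n pbar x (pulse M T) := by
  have hS : 0 < deliverableEnergy pbar x T := (mul_pos hM hT).trans_le h
  set r := M / deliverableEnergy pbar x T
  have hr : 0 ≤ r := div_nonneg hM.le hS.le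
  have hrT : r * T ≤ 1 := by rwa [div_mul_eq_mul_div, div_le_one hS]
  have hshare : ∀ i, 0 ≤ pbar i * min T (x i) := fun i => mul_nonneg (hp i) (le_min hT.le (hx i))
  refine feasible_pulse_of_split hT.le (fun i => r * (pbar i * min T (x i)))
    (fun i => ⟨mul_nonneg hr (hshare i), ?_⟩) (fun i => ?_) ?_
  · calc r * (pbar i * min T (x i)) ≤ r * (pbar i * T) := by
          gcongr
          · exact hp i
          · exact min_le_left _ _
      _ = pbar i * (r * T) := by ring
      _ ≤ pbar i := mul_le_of_le_one_right (hp i) hrT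
  · calc r * (pbar i * min T (x i)) * T = pbar i * min T (x i) * (r * T) := by ring
      _ ≤ pbar i * min T (x i) := mul_le_of_le_one_right (hshare i) hrT
      _ ≤ pbar i * x i := mul_le_mul_of_nonneg_left (min_le_right _ _) (hp i)
  · rw [← Finset.mul_sum]
    exact div_mul_cancel₀ M hS.ne'

end Fleet

theorem pulse_feasible_iff_general
    (n : ℕ) (pbar x : Fin n → ℝ)
    (hp : ∀ i, 0 < pbar i) (hx : ∀ i, 0 ≤ x i)
    (M T : ℝ) (hM : 0 < M) (hT : 0 < T) :
    Feasible n pbar x (fun t => Set.indicator (Ico (0 : ℝ) T) (fun _ => M) t) ↔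
      ∀ p : ℝ, 0 ≤ p → ENNReal.ofReal (T * max (M - p) 0) ≤ capacity n pbar x p := by
  have hp' : ∀ i, 0 ≤ pbar i := fun i => (hp i).le
  rw [pulse_energy_le_capacity_iff hp' hx hT.le]
  exact ⟨Feasible.mul_le_deliverableEnergy hT.le,
    feasible_pulse_of_mul_le_deliverableEnergy hp' hx hM hT⟩

/-- Maximum feasible pulse: the pulse of magnitude `M` and duration `T` is feasible
for the fleet iff `T · max{M − p, 0} ≤ Ω_{p̄,x}(p)` for all `p ≥ 0`. -/
theorem pulse_feasible_iff
    (n : ℕ) (hn : 1 ≤ n) (pbar x : Fin n → ℝ)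
    (hp : ∀ i, 0 < pbar i) (hx : ∀ i, 0 ≤ x i)
    (M T : ℝ) (hM : 0 < M) (hT : 0 < T) :
    Feasible n pbar x (fun t => Set.indicator (Ico (0 : ℝ) T) (fun _ => M) t) ↔
      ∀ p : ℝ, 0 ≤ p → ENNReal.ofReal (T * max (M - p) 0) ≤ capacity n pbar x p :=
  pulse_feasible_iff_general n pbar x hp hx M T hM hT
end
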